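/- Let P₁ be a Boolean function F₂ⁿ → F₂, and let s̄₁, …, s̄ₙ be functions where s̄_{j-1} depends only on the coordinates x_j,…,xₙ. Recursively define P_j(x) = P_{j-1}(x with x_{j-1} := s̄_{j-1}(x)) · P_{j-1}(x with x_{j-1} := s̄_{j-1}(x)+1) for j = 2,…,n+1. Then P₁ has a zero in F₂ⁿ if and only if P_{n+1} has a zero; moreover each P_j depends only on coordinates x_j,…,xₙ, so P_{n+1} is a constant, and P₁ has a zero if and only if the constant P_{n+1} equals 0. -/

import Mathlib

/-! Substituting `x_j := σ(α)` and `x_j := σ(α) + 1` runs through both values of `x_j`, so the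
product of the two substitutions vanishes at `α` exactly when `f` vanishes at one of the two
points of the line through `α` in direction `j`; hence each elimination step preserves
solvability. Since `σ` ignores `x_j`, the product no longer depends on `x_j` either, and after
all `n` steps nothing is left but a constant. -/

open Function

section Elimination

variable {ι : Type*} [DecidableEq ι] {R : Type*}

def eliminateVar [Mul R] (f : (ι → ZMod 2) → R) (j : ι) (σ : (ι → ZMod 2) → ZMod 2)
    (α : ι → ZMod 2) : R :=
  f (update α j (σ α)) * f (update α j (σ α + 1))

theorem ZMod.two_eq_or_eq_add_one (a b : ZMod 2) : a = b ∨ a = b + 1 := by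
  decide +revert

theorem exists_eliminateVar_eq_zero_iff [MulZeroClass R] [NoZeroDivisors R]
    (f : (ι → ZMod 2) → R) (j : ι) (σ : (ι → ZMod 2) → ZMod 2) :
    (∃ α, eliminateVar f j σ α = 0) ↔ ∃ α, f α = 0 := by
  constructor
  · rintro ⟨α, hα⟩
    rcases mul_eq_zero.mp hα with h | h
    exacts [⟨_, h⟩, ⟨_, h⟩]
  · rintro ⟨α, hα⟩
    refine ⟨α, ?_⟩
    rcases ZMod.two_eq_or_eq_add_one (α j) (σ α) with h | h
    · rw [eliminateVar, ← h, update_eq_self, hα, zero_mul]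
    · rw [eliminateVar, ← h, update_eq_self, hα, mul_zero]

theorem DependsOn.eliminateVar [Mul R] {f : (ι → ZMod 2) → R} {j : ι}
    {σ : (ι → ZMod 2) → ZMod 2} {S : Set ι} (hf : DependsOn f (insert j S))
    (hσ : DependsOn σ S) : DependsOn (eliminateVar f j σ) S := by
  intro α β hαβ
  have hupdate (v : ZMod 2) : f (Function.update α j v) = f (Function.update β j v) :=
    hf fun i hi ↦ by
      rcases eq_or_ne i j with rfl | hij
      · simp
      · simp [hij, hαβ i (hi.resolve_left hij)]
  simp only [_root_.eliminateVar, hσ hαβ, hupdate]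

end Elimination

/-- Indexing is 0-based: `P j` is the paper's `P_{j+1}`. -/
theorem elimination_chain {n : ℕ}
    (P : ℕ → (Fin n → ZMod 2) → ZMod 2)
    (s : Fin n → (Fin n → ZMod 2) → ZMod 2)
    (hs : ∀ j : Fin n, ∀ α β : Fin n → ZMod 2,
      (∀ i : Fin n, (j : ℕ) < (i : ℕ) → α i = β i) → s j α = s j β)
    (hP : ∀ j : Fin n, ∀ α,
      P ((j : ℕ) + 1) α =
        P j (Function.update α j (s j α)) * P j (Function.update α j (s j α + 1))) :
    ((∃ α, P 0 α = 0) ↔ (∃ α, P n α = 0)) ∧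
    (∀ j, j ≤ n → ∀ α β : Fin n → ZMod 2,
      (∀ i : Fin n, j ≤ (i : ℕ) → α i = β i) → P j α = P j β) ∧
    ((∃ α, P 0 α = 0) ↔ P n (fun _ => 0) = 0) := by
  have hstep (j : Fin n) : P (j + 1) = eliminateVar (P j) j (s j) := funext (hP j)
  have hdep : ∀ j ≤ n, DependsOn (P j) {i : Fin n | j ≤ i} := by
    intro j hj
    induction j with
    | zero => exact (dependsOn_univ _).mono fun i _ ↦ Nat.zero_le i
    | succ j ih =>
      rw [hstep ⟨j, hj⟩]
      refine DependsOn.eliminateVar ((ih (j.le_succ.trans hj)).mono ?_) (hs ⟨j, hj⟩)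
      intro i (hi : j ≤ i)
      rcases hi.eq_or_lt with hi | hi
      exacts [Or.inl (Fin.ext hi.symm), Or.inr hi]
  have hchain : ∀ k ≤ n, (∃ α, P 0 α = 0) ↔ ∃ α, P k α = 0 := by
    intro k hk
    induction k with
    | zero => rfl
    | succ k ih =>
      rw [ih (k.le_succ.trans hk), hstep ⟨k, hk⟩, exists_eliminateVar_eq_zero_iff]
  have hconst (α : Fin n → ZMod 2) : P n α = P n (fun _ ↦ 0) :=
    hdep n le_rfl fun i hi ↦ absurd i.isLt (not_lt.mpr hi)
  refine ⟨hchain n le_rfl, hdep, (hchain n le_rfl).trans ?_⟩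
  exact ⟨fun ⟨α, hα⟩ ↦ hconst α ▸ hα, fun h ↦ ⟨_, h⟩⟩
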